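/- arXiv:2510.08999 — 4 statements merged into one kernel-verified Lean document; each statement's English description precedes it below -/
import Mathlib

section
/- Let μ be a probability measure on a measurable space Ω and let h : Ω → ℝ be measurable with e^h integrable with respect to μ. Then log ∫ e^{h} dμ = sup over all probability measures ρ on Ω such that KL(ρ‖μ) < ∞ and h is ρ-integrable of the quantity ∫ h dρ − KL(ρ‖μ). -/
open MeasureTheory ProbabilityTheory Real Filter
open scoped ENNReal NNReal Classical Topology


open MeasureTheory ProbabilityTheory Real
open scoped ENNReal NNReal Classical

/-- Kullback–Leibler divergence: `∫ log (dP/dQ) dP` when `P ≪ Q` (and the log-likelihood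
ratio is `P`-integrable), and `+∞` otherwise. -/

noncomputable def klDiv {Ω : Type*} [MeasurableSpace Ω] (P Q : Measure Ω) : ℝ≥0∞ :=
  if P ≪ Q ∧ Integrable (llr P Q) P then ENNReal.ofReal (∫ ω, llr P Q ω ∂P) else ⊤

/-- Gibbs' inequality: the integral of the log-likelihood ratio between two probability
measures is nonnegative. -/
lemma llr_integral_nonneg {Ω : Type*} [MeasurableSpace Ω] {P Q : Measure Ω}
    [IsProbabilityMeasure P] [IsProbabilityMeasure Q]
    (hPQ : P ≪ Q) (hil : Integrable (llr P Q) P) : 0 ≤ ∫ ω, llr P Q ω ∂P := by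
  have hil' : Integrable (llr Q P) P := by
    have := hil.neg
    rw [integrable_congr (neg_llr hPQ)] at this
    exact this
  have hle : ∀ᵐ ω ∂P, llr Q P ω ≤ (Q.rnDeriv P ω).toReal - 1 := by
    filter_upwards [Measure.inv_rnDeriv hPQ, Measure.rnDeriv_pos hPQ,
      hPQ.ae_le (Measure.rnDeriv_lt_top P Q)] with ω hinv hpos hlt
    have h1 : Q.rnDeriv P ω = (P.rnDeriv Q ω)⁻¹ := hinv.symm
    have h2 : 0 < ((Q.rnDeriv P ω).toReal) := by
      rw [h1]
      refine ENNReal.toReal_pos ?_ ?_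
      · simp [hlt.ne]
      · simp [hpos.ne']
    exact (Real.log_le_sub_one_of_pos h2)
  have hint2 : Integrable (fun ω => (Q.rnDeriv P ω).toReal - 1) P :=
    Measure.integrable_toReal_rnDeriv.sub (integrable_const 1)
  have h3 : ∫ ω, llr Q P ω ∂P ≤ ∫ ω, ((Q.rnDeriv P ω).toReal - 1) ∂P :=
    integral_mono_ae hil' hint2 hle
  have h4 : ∫ ω, ((Q.rnDeriv P ω).toReal - 1) ∂P ≤ 0 := by
    rw [integral_sub Measure.integrable_toReal_rnDeriv (integrable_const 1)]
    have h5 : ∫ ω, (Q.rnDeriv P ω).toReal ∂P ≤ 1 := by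
      rw [Measure.integral_toReal_rnDeriv']
      have := ENNReal.toReal_nonneg (a := Q.singularPart P Set.univ)
      simp only [probReal_univ, Measure.real, measure_univ, ENNReal.toReal_one]
      linarith
    simp only [integral_const, probReal_univ, smul_eq_mul, one_mul]
    linarith
  have h6 : ∫ ω, llr Q P ω ∂P = - ∫ ω, llr P Q ω ∂P := by
    rw [← integral_neg]
    exact integral_congr_ae (neg_llr hPQ).symm
  linarith [h3.trans h4, h6 ▸ (h3.trans h4)]

lemma key_bound (c x : ℝ) (hc : 0 ≤ c) : |x| * Real.exp (min x c) ≤ 1 + Real.exp c * Real.exp x := by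
  rcases le_or_gt x 0 with hx | hx
  · have hmin : min x c = x := min_eq_left (hx.trans hc)
    rw [hmin]
    have h1 : -x ≤ Real.exp (-x) - 1 := by linarith [Real.add_one_le_exp (-x)]
    have h2 : |x| = -x := abs_of_nonpos hx
    have : |x| * Real.exp x ≤ (Real.exp (-x) - 1) * Real.exp x := by
      rw [h2]; exact mul_le_mul_of_nonneg_right h1 (Real.exp_pos x).le
    have h3 : (Real.exp (-x) - 1) * Real.exp x = 1 - Real.exp x := by
      rw [sub_mul, ← Real.exp_add, neg_add_cancel, Real.exp_zero, one_mul]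
    nlinarith [Real.exp_pos x, mul_nonneg (Real.exp_pos c).le (Real.exp_pos x).le]
  · have h1 : |x| = x := abs_of_pos hx
    have h2 : x ≤ Real.exp x := (Real.add_one_le_exp x).trans' (by linarith)
    have h3 : Real.exp (min x c) ≤ Real.exp c := Real.exp_le_exp.mpr (min_le_right x c)
    calc |x| * Real.exp (min x c) ≤ Real.exp x * Real.exp c := by
          rw [h1]; exact mul_le_mul h2 h3 (Real.exp_pos _).le (Real.exp_pos _).le
      _ ≤ 1 + Real.exp c * Real.exp x := by nlinarith

lemma integrable_tilted_of_bound {Ω : Type*} [MeasurableSpace Ω] (μ : Measure Ω)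
    [IsProbabilityMeasure μ] (f g B : Ω → ℝ) (hf : Measurable f) (hg : Measurable g)
    (hfi : Integrable (fun ω => Real.exp (f ω)) μ) (hB : Integrable B μ)
    (hbound : ∀ ω, |g ω| * Real.exp (f ω) ≤ B ω) : Integrable g (μ.tilted f) := by
  have hZ : 0 < ∫ ω, Real.exp (f ω) ∂μ := integral_exp_pos hfi
  have hd : Measurable fun ω => ENNReal.ofReal (Real.exp (f ω) / ∫ ω, Real.exp (f ω) ∂μ) :=
    ((Real.measurable_exp.comp hf).div_const _).ennreal_ofReal
  rw [Measure.tilted, integrable_withDensity_iff hd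
    (Filter.Eventually.of_forall fun ω => ENNReal.ofReal_lt_top)]
  refine Integrable.mono (hB.div_const (∫ ω, Real.exp (f ω) ∂μ))
    (hg.aestronglyMeasurable.mul hd.ennreal_toReal.aestronglyMeasurable) ?_
  refine Filter.Eventually.of_forall fun ω => ?_
  have h1 : (ENNReal.ofReal (Real.exp (f ω) / ∫ ω, Real.exp (f ω) ∂μ)).toReal
      = Real.exp (f ω) / ∫ ω, Real.exp (f ω) ∂μ :=
    ENNReal.toReal_ofReal (by positivity)
  have hBnn : 0 ≤ B ω := le_trans (by positivity) (hbound ω)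
  rw [norm_mul, h1, Real.norm_eq_abs, Real.norm_eq_abs, Real.norm_eq_abs,
    abs_of_nonneg (by positivity : (0:ℝ) ≤ Real.exp (f ω) / _),
    abs_of_nonneg (by positivity : (0:ℝ) ≤ B ω / _)]
  rw [div_eq_mul_inv, div_eq_mul_inv, ← mul_assoc]
  exact mul_le_mul_of_nonneg_right (hbound ω) (by positivity)

lemma dv_tilted_min {Ω : Type*} [MeasurableSpace Ω] (μ : Measure Ω) [IsProbabilityMeasure μ]
    (h : Ω → ℝ) (hmeas : Measurable h) (hint : Integrable (fun ω => Real.exp (h ω)) μ) (n : ℕ) :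
    IsProbabilityMeasure (μ.tilted (fun ω => min (h ω) n)) ∧
    klDiv (μ.tilted (fun ω => min (h ω) n)) μ < ⊤ ∧
    Integrable h (μ.tilted (fun ω => min (h ω) n)) ∧
    Real.log (∫ ω, Real.exp (min (h ω) n) ∂μ) ≤
      (∫ ω, h ω ∂(μ.tilted (fun ω => min (h ω) n))) -
        (klDiv (μ.tilted (fun ω => min (h ω) n)) μ).toReal := by
  have hFmeas : Measurable (fun ω => min (h ω) (n:ℝ)) := hmeas.min measurable_const
  have hFle : ∀ ω, min (h ω) (n:ℝ) ≤ h ω := fun ω => min_le_left _ _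
  have hFexp : Integrable (fun ω => Real.exp (min (h ω) (n:ℝ))) μ := by
    refine hint.mono (Real.measurable_exp.comp hFmeas).aestronglyMeasurable ?_
    refine Filter.Eventually.of_forall fun ω => ?_
    rw [Real.norm_eq_abs, Real.norm_eq_abs, abs_of_pos (Real.exp_pos _),
      abs_of_pos (Real.exp_pos _)]
    exact Real.exp_le_exp.mpr (hFle ω)
  have hBint : Integrable (fun ω => 1 + Real.exp n * Real.exp (h ω)) μ :=
    (integrable_const 1).add (hint.const_mul _)
  haveI hρn : IsProbabilityMeasure (μ.tilted (fun ω => min (h ω) n)) :=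
    isProbabilityMeasure_tilted hFexp
  have hih : Integrable h (μ.tilted (fun ω => min (h ω) n)) := by
    refine integrable_tilted_of_bound μ _ h _ hFmeas hmeas hFexp hBint ?_
    exact fun ω => key_bound n (h ω) (Nat.cast_nonneg n)
  have hiF : Integrable (fun ω => min (h ω) (n:ℝ)) (μ.tilted (fun ω => min (h ω) n)) := by
    refine integrable_tilted_of_bound μ _ _ _ hFmeas hFmeas hFexp hBint ?_
    intro ω
    have h1 : min (h ω) (n:ℝ) = min (min (h ω) (n:ℝ)) (n:ℝ) :=
      (min_eq_left (min_le_right _ _)).symm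
    calc |min (h ω) (n:ℝ)| * Real.exp (min (h ω) (n:ℝ))
        = |min (h ω) (n:ℝ)| * Real.exp (min (min (h ω) (n:ℝ)) (n:ℝ)) := by rw [← h1]
      _ ≤ 1 + Real.exp n * Real.exp (min (h ω) (n:ℝ)) :=
          key_bound n (min (h ω) (n:ℝ)) (Nat.cast_nonneg n)
      _ ≤ 1 + Real.exp n * Real.exp (h ω) := by
          have := Real.exp_le_exp.mpr (hFle ω)
          nlinarith [Real.exp_pos ((n:ℝ))]
  have hack : μ.tilted (fun ω => min (h ω) n) ≪ μ := tilted_absolutelyContinuous μ _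
  have hllr_eq : llr (μ.tilted (fun ω => min (h ω) n)) μ =ᵐ[μ.tilted (fun ω => min (h ω) n)]
      fun ω => min (h ω) (n:ℝ) - Real.log (∫ ω, Real.exp (min (h ω) (n:ℝ)) ∂μ) := by
    refine hack.ae_le ?_
    have h1 := llr_tilted_left (Measure.AbsolutelyContinuous.rfl (μ := μ)) hFexp
      hFmeas.aemeasurable
    have h2 : llr μ μ =ᵐ[μ] fun _ => (0:ℝ) := by
      filter_upwards [Measure.rnDeriv_self μ] with ω hω
      simp [llr, hω]
    filter_upwards [h1, h2] with ω hω1 hω2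
    rw [hω1, hω2]
    simp
  have hilr : Integrable (llr (μ.tilted (fun ω => min (h ω) n)) μ)
      (μ.tilted (fun ω => min (h ω) n)) := by
    rw [integrable_congr hllr_eq]
    exact hiF.sub (integrable_const _)
  have hkln : klDiv (μ.tilted (fun ω => min (h ω) n)) μ < ⊤ := by
    rw [klDiv, if_pos ⟨hack, hilr⟩]
    exact ENNReal.ofReal_lt_top
  refine ⟨hρn, hkln, hih, ?_⟩
  have hnn : 0 ≤ ∫ ω, llr (μ.tilted (fun ω => min (h ω) n)) μ ω
      ∂(μ.tilted (fun ω => min (h ω) n)) := llr_integral_nonneg hack hilr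
  have heq : ∫ ω, llr (μ.tilted (fun ω => min (h ω) n)) μ ω ∂(μ.tilted (fun ω => min (h ω) n))
      = (∫ ω, min (h ω) (n:ℝ) ∂(μ.tilted (fun ω => min (h ω) n)))
        - Real.log (∫ ω, Real.exp (min (h ω) (n:ℝ)) ∂μ) := by
    rw [integral_congr_ae hllr_eq, integral_sub hiF (integrable_const _)]
    simp
  have ht : (klDiv (μ.tilted (fun ω => min (h ω) n)) μ).toReal
      = (∫ ω, min (h ω) (n:ℝ) ∂(μ.tilted (fun ω => min (h ω) n)))
        - Real.log (∫ ω, Real.exp (min (h ω) (n:ℝ)) ∂μ) := by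
    rw [klDiv, if_pos ⟨hack, hilr⟩, ENNReal.toReal_ofReal hnn, heq]
  have hmono : ∫ ω, min (h ω) (n:ℝ) ∂(μ.tilted (fun ω => min (h ω) n))
      ≤ ∫ ω, h ω ∂(μ.tilted (fun ω => min (h ω) n)) := integral_mono hiF hih hFle
  rw [ht]
  linarith

/-- Donsker–Varadhan variational characterization of the KL divergence:
`log ∫ e^h dμ` equals the supremum over probability measures `ρ` with `KL(ρ‖μ) < ∞` and
`h` `ρ`-integrable of `∫ h dρ − KL(ρ‖μ)`. -/
theorem donsker_varadhan {Ω : Type*} [MeasurableSpace Ω]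
    (μ : Measure Ω) [IsProbabilityMeasure μ] (h : Ω → ℝ) (hmeas : Measurable h)
    (hint : Integrable (fun ω => Real.exp (h ω)) μ) :
    Real.log (∫ ω, Real.exp (h ω) ∂μ) =
      ⨆ ρ : {ρ : Measure Ω // IsProbabilityMeasure ρ ∧ klDiv ρ μ < ⊤ ∧ Integrable h ρ},
        ((∫ ω, h ω ∂(ρ : Measure Ω)) - (klDiv (ρ : Measure Ω) μ).toReal) := by
  have hZpos : 0 < ∫ ω, Real.exp (h ω) ∂μ := integral_exp_pos hint
  have key_ub : ∀ (ρ : Measure Ω), IsProbabilityMeasure ρ → klDiv ρ μ < ⊤ → Integrable h ρ →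
      (∫ ω, h ω ∂ρ) - (klDiv ρ μ).toReal ≤ Real.log (∫ ω, Real.exp (h ω) ∂μ) := by
    intro ρ hρ hkl hihρ
    haveI := hρ
    by_cases hc : ρ ≪ μ ∧ Integrable (llr ρ μ) ρ
    · obtain ⟨hac, hil⟩ := hc
      have hkld : klDiv ρ μ = ENNReal.ofReal (∫ ω, llr ρ μ ω ∂ρ) := if_pos ⟨hac, hil⟩
      have hnn : 0 ≤ ∫ ω, llr ρ μ ω ∂ρ := llr_integral_nonneg hac hil
      haveI : IsProbabilityMeasure (μ.tilted h) := isProbabilityMeasure_tilted hint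
      have hac2 : ρ ≪ μ.tilted h := hac.trans (absolutelyContinuous_tilted hint)
      have hil2 : Integrable (llr ρ (μ.tilted h)) ρ :=
        integrable_llr_tilted_right hac hihρ hil hint
      have h0 : 0 ≤ ∫ ω, llr ρ (μ.tilted h) ω ∂ρ := llr_integral_nonneg hac2 hil2
      rw [integral_llr_tilted_right hac hihρ hint hil] at h0
      rw [hkld, ENNReal.toReal_ofReal hnn]
      linarith
    · rw [klDiv, if_neg hc] at hkl
      exact absurd hkl (lt_irrefl _)
  haveI hne : Nonempty {ρ : Measure Ω // IsProbabilityMeasure ρ ∧ klDiv ρ μ < ⊤ ∧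
      Integrable h ρ} := by
    obtain ⟨h1, h2, h3, _⟩ := dv_tilted_min μ h hmeas hint 0
    exact ⟨⟨μ.tilted (fun ω => min (h ω) (0:ℕ)), h1, h2, h3⟩⟩
  have hbdd : BddAbove (Set.range fun ρ : {ρ : Measure Ω // IsProbabilityMeasure ρ ∧
      klDiv ρ μ < ⊤ ∧ Integrable h ρ} =>
      (∫ ω, h ω ∂(ρ : Measure Ω)) - (klDiv (ρ : Measure Ω) μ).toReal) := by
    refine ⟨Real.log (∫ ω, Real.exp (h ω) ∂μ), ?_⟩
    rintro x ⟨ρ, rfl⟩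
    exact key_ub ρ ρ.2.1 ρ.2.2.1 ρ.2.2.2
  refine le_antisymm ?_ (ciSup_le fun ρ => key_ub ρ ρ.2.1 ρ.2.2.1 ρ.2.2.2)
  have hlen : ∀ n : ℕ, Real.log (∫ ω, Real.exp (min (h ω) n) ∂μ) ≤
      ⨆ ρ : {ρ : Measure Ω // IsProbabilityMeasure ρ ∧ klDiv ρ μ < ⊤ ∧ Integrable h ρ},
        ((∫ ω, h ω ∂(ρ : Measure Ω)) - (klDiv (ρ : Measure Ω) μ).toReal) := by
    intro n
    obtain ⟨h1, h2, h3, h4⟩ := dv_tilted_min μ h hmeas hint n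
    exact h4.trans (le_ciSup hbdd ⟨μ.tilted (fun ω => min (h ω) n), h1, h2, h3⟩)
  have htend : Filter.Tendsto (fun n : ℕ => ∫ ω, Real.exp (min (h ω) n) ∂μ) Filter.atTop
      (nhds (∫ ω, Real.exp (h ω) ∂μ)) := by
    refine tendsto_integral_of_dominated_convergence (fun ω => Real.exp (h ω))
      (fun n => (Real.measurable_exp.comp (hmeas.min measurable_const)).aestronglyMeasurable)
      hint ?_ ?_
    · intro n
      refine Filter.Eventually.of_forall fun ω => ?_
      rw [Real.norm_eq_abs, abs_of_pos (Real.exp_pos _)]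
      exact Real.exp_le_exp.mpr (min_le_left _ _)
    · refine Filter.Eventually.of_forall fun ω => ?_
      refine Filter.Tendsto.congr' ?_ tendsto_const_nhds
      rw [Filter.EventuallyEq, Filter.eventually_atTop]
      refine ⟨⌈h ω⌉₊, fun n hn => ?_⟩
      have hle : h ω ≤ (n:ℝ) := le_trans (Nat.le_ceil _) (Nat.cast_le.mpr hn)
      rw [min_eq_left hle]
  have hlog : Filter.Tendsto (fun n : ℕ => Real.log (∫ ω, Real.exp (min (h ω) n) ∂μ))
      Filter.atTop (nhds (Real.log (∫ ω, Real.exp (h ω) ∂μ))) :=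
    (Real.continuousAt_log hZpos.ne').tendsto.comp htend
  exact le_of_tendsto hlog (Filter.Eventually.of_forall hlen)
end

section
/- Let B ≥ 0, T > 0, ε > 0 with T/ε > 1, and let K ≥ 1. Let φ₁, …, φ_K ≥ 0 with Σ_{k=1}^K φ_k = 1, let μ₁, …, μ_K ∈ ℝ with |μ_k| ≤ B for all k, and let σ₁², …, σ_K² satisfy 0 < σ_k² ≤ 1/(2·log(T/ε)) for all k. Then the Gaussian mixture measure Q = Σ_{k=1}^K φ_k·N(μ_k, σ_k²) satisfies Q({x ∈ ℝ : |x| > B + 1}) ≤ ε/T. -/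
open MeasureTheory ProbabilityTheory Real
open scoped ENNReal NNReal

open Set in
/-- Half of the mass of a Gaussian lies above its mean. -/
lemma gauss_half (m : ℝ) (v : ℝ≥0) (hv : v ≠ 0) :
    ∫ x in Set.Ici m, gaussianPDFReal m v x = 1/2 := by
  have hv' : (0:ℝ) < v := lt_of_le_of_ne (v.coe_nonneg) (by exact_mod_cast (Ne.symm hv))
  rw [integral_Ici_eq_integral_Ioi]
  have hmp : MeasurePreserving (fun x : ℝ => x + m) volume volume :=
    measurePreserving_add_right volume m
  have hemb : MeasurableEmbedding (fun x : ℝ => x + m) :=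
    (Homeomorph.addRight m).measurableEmbedding
  have hpre : (fun x : ℝ => x + m) ⁻¹' Ioi m = Ioi 0 := by
    ext x; simp [Set.mem_Ioi]
  have := hmp.setIntegral_preimage_emb hemb (fun x => gaussianPDFReal m v x) (Ioi m)
  rw [hpre] at this
  rw [← this]
  have heq : ∀ x : ℝ, gaussianPDFReal m v (x + m) =
      (√(2 * π * v))⁻¹ * rexp (-((2 * (v:ℝ))⁻¹) * x ^ 2) := by
    intro x
    simp only [gaussianPDFReal, add_sub_cancel_right]
    congr 1
    field_simp
  simp_rw [heq]
  rw [integral_const_mul, integral_gaussian_Ioi]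
  have h2 : π / (2 * (v:ℝ))⁻¹ = 2 * π * v := by field_simp
  rw [h2]
  have h3 : Real.sqrt (2 * π * v) ≠ 0 := by positivity
  field_simp

open Set in
/-- Upper tail bound for a Gaussian: the mass above `m + 1` is at most
`exp (-1/(2v)) / 2`. -/
lemma gauss_upper (m : ℝ) (v : ℝ≥0) (hv : v ≠ 0) :
    ∫ x in Set.Ici (m+1), gaussianPDFReal m v x ≤ rexp (-(1/(2*(v:ℝ)))) / 2 := by
  have hv' : (0:ℝ) < v := lt_of_le_of_ne (v.coe_nonneg) (by exact_mod_cast (Ne.symm hv))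
  have hpt : ∀ x ∈ Set.Ici (m+1), gaussianPDFReal m v x ≤
      rexp (-(1/(2*(v:ℝ)))) * gaussianPDFReal (m+1) v x := by
    intro x hx
    simp only [Set.mem_Ici] at hx
    simp only [gaussianPDFReal]
    rw [show rexp (-(1/(2*(v:ℝ)))) * ((√(2 * π * v))⁻¹ * rexp (-(x-(m+1))^2/(2*(v:ℝ)))) =
      (√(2 * π * v))⁻¹ * rexp (-(1/(2*(v:ℝ))) + -(x-(m+1))^2/(2*(v:ℝ))) by
        rw [Real.exp_add]; ring]
    refine mul_le_mul_of_nonneg_left ?_ (by positivity)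
    refine Real.exp_le_exp.mpr ?_
    rw [show -(1/(2*(v:ℝ))) + -(x-(m+1))^2/(2*(v:ℝ)) = (-1 + -(x-(m+1))^2)/(2*(v:ℝ)) by ring]
    rw [div_le_div_iff_of_pos_right (by positivity)]
    nlinarith [sq_nonneg (x - m - 1)]
  calc ∫ x in Set.Ici (m+1), gaussianPDFReal m v x
      ≤ ∫ x in Set.Ici (m+1), rexp (-(1/(2*(v:ℝ)))) * gaussianPDFReal (m+1) v x := by
        refine setIntegral_mono_on ((integrable_gaussianPDFReal m v).integrableOn)
          (((integrable_gaussianPDFReal (m+1) v).const_mul _).integrableOn)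
          measurableSet_Ici hpt
    _ = rexp (-(1/(2*(v:ℝ)))) * (1/2) := by
        rw [integral_const_mul, gauss_half (m+1) v hv]
    _ = rexp (-(1/(2*(v:ℝ)))) / 2 := by ring

open Set in
/-- Lower tail bound for a Gaussian: the mass below `m - 1` is at most
`exp (-1/(2v)) / 2`. -/
lemma gauss_lower (m : ℝ) (v : ℝ≥0) (hv : v ≠ 0) :
    ∫ x in Set.Iic (m-1), gaussianPDFReal m v x ≤ rexp (-(1/(2*(v:ℝ)))) / 2 := by
  have hmp : MeasurePreserving (fun x : ℝ => -x) volume volume :=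
    Measure.measurePreserving_neg volume
  have hemb : MeasurableEmbedding (fun x : ℝ => -x) :=
    (Homeomorph.neg ℝ).measurableEmbedding
  have hpre : (fun x : ℝ => -x) ⁻¹' Iic (m-1) = Ici (1-m) := by
    ext x; simp only [Set.mem_preimage, Set.mem_Iic, Set.mem_Ici]
    constructor <;> intro h <;> linarith
  have h := hmp.setIntegral_preimage_emb hemb (fun x => gaussianPDFReal m v x) (Iic (m-1))
  rw [hpre] at h
  rw [← h]
  have heq : ∀ x : ℝ, gaussianPDFReal m v (-x) = gaussianPDFReal (-m) v x := by
    intro x; simp only [gaussianPDFReal]; congr 2; ring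
  simp_rw [heq]
  have := gauss_upper (-m) v hv
  rw [show -m + 1 = 1 - m by ring] at this
  exact this

open Set in
/-- Two-sided tail bound for a Gaussian: the mass at distance at least `1` from
the mean is at most `exp (-1/(2v))`. -/
lemma gauss_tail (m : ℝ) (v : ℝ≥0) (hv : v ≠ 0) :
    gaussianReal m v {x : ℝ | 1 ≤ |x - m|} ≤ ENNReal.ofReal (rexp (-(1/(2*(v:ℝ))))) := by
  rw [gaussianReal_apply_eq_integral m hv]
  refine ENNReal.ofReal_le_ofReal ?_
  have hset : {x : ℝ | 1 ≤ |x - m|} = Set.Iic (m-1) ∪ Set.Ici (m+1) := by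
    ext x
    simp only [Set.mem_setOf_eq, Set.mem_union, Set.mem_Iic, Set.mem_Ici, le_abs]
    constructor
    · rintro (h | h); · right; linarith
      · left; linarith
    · rintro (h | h); · right; linarith
      · left; linarith
  rw [hset, setIntegral_union (Set.Iic_disjoint_Ici.mpr (by linarith)) measurableSet_Ici
    ((integrable_gaussianPDFReal m v).integrableOn) ((integrable_gaussianPDFReal m v).integrableOn)]
  have h1 := gauss_lower m v hv
  have h2 := gauss_upper m v hv
  linarith

/-- Gaussian mixture tail estimate: if each component mean satisfies `|μ_k| ≤ B` and each
variance satisfies `0 < σ_k² ≤ 1/(2·log(T/ε))` with `T/ε > 1`, then the mixture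
`Q = Σ_k φ_k·N(μ_k, σ_k²)` satisfies `Q({x : |x| > B + 1}) ≤ ε/T`. -/
theorem gaussian_mixture_tail_bound (B T ε : ℝ) (hB : 0 ≤ B) (hT : 0 < T) (hε : 0 < ε)
    (hTε : 1 < T / ε) (K : ℕ) (hK : 1 ≤ K) (φ : Fin K → ℝ) (hφ : ∀ k, 0 ≤ φ k)
    (hφsum : ∑ k, φ k = 1) (μ : Fin K → ℝ) (hμ : ∀ k, |μ k| ≤ B)
    (v : Fin K → ℝ≥0) (hv : ∀ k, 0 < v k)
    (hvle : ∀ k, (v k : ℝ) ≤ 1 / (2 * Real.log (T / ε))) :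
    (∑ k, (ENNReal.ofReal (φ k)) • gaussianReal (μ k) (v k)) {x : ℝ | B + 1 < |x|} ≤
      ENNReal.ofReal (ε / T) := by
  have hL : 0 < Real.log (T / ε) := Real.log_pos hTε
  have hcomp : ∀ k : Fin K, gaussianReal (μ k) (v k) {x : ℝ | B + 1 < |x|} ≤
      ENNReal.ofReal (ε / T) := by
    intro k
    have hvk : (v k) ≠ 0 := (hv k).ne'
    have hvk' : (0:ℝ) < v k := by exact_mod_cast hv k
    have hsub : {x : ℝ | B + 1 < |x|} ⊆ {x : ℝ | 1 ≤ |x - μ k|} := by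
      intro x hx
      simp only [Set.mem_setOf_eq] at *
      have := abs_sub_abs_le_abs_sub x (μ k)
      have := hμ k
      linarith
    calc gaussianReal (μ k) (v k) {x : ℝ | B + 1 < |x|}
        ≤ gaussianReal (μ k) (v k) {x : ℝ | 1 ≤ |x - μ k|} := measure_mono hsub
      _ ≤ ENNReal.ofReal (rexp (-(1/(2*((v k):ℝ))))) := gauss_tail _ _ hvk
      _ ≤ ENNReal.ofReal (ε / T) := by
          refine ENNReal.ofReal_le_ofReal ?_
          have h1 : Real.log (T / ε) ≤ 1/(2*((v k):ℝ)) := by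
            have := hvle k
            rw [le_div_iff₀ (by positivity)] at *
            nlinarith
          calc rexp (-(1/(2*((v k):ℝ)))) ≤ rexp (-(Real.log (T/ε))) :=
                Real.exp_le_exp.mpr (by linarith)
            _ = ε / T := by
                rw [← Real.log_inv, Real.exp_log (by positivity)]
                rw [inv_div]
  calc (∑ k, (ENNReal.ofReal (φ k)) • gaussianReal (μ k) (v k)) {x : ℝ | B + 1 < |x|}
      = ∑ k, ENNReal.ofReal (φ k) * gaussianReal (μ k) (v k) {x : ℝ | B + 1 < |x|} := by
        rw [Measure.finset_sum_apply]
        simp [Measure.smul_apply, smul_eq_mul]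
    _ ≤ ∑ k, ENNReal.ofReal (φ k) * ENNReal.ofReal (ε / T) :=
        Finset.sum_le_sum fun k _ => mul_le_mul_right (hcomp k) _
    _ = (∑ k, ENNReal.ofReal (φ k)) * ENNReal.ofReal (ε / T) := by
        rw [Finset.sum_mul]
    _ = ENNReal.ofReal (ε / T) := by
        rw [← ENNReal.ofReal_sum_of_nonneg (fun k _ => hφ k), hφsum, ENNReal.ofReal_one, one_mul]
end

section
/- Let K ≥ 1, σ > 0, t > 0, and let φ₁, …, φ_K ≥ 0 with Σ_{k=1}^K φ_k = 1. Let μ₁, …, μ_K ∈ ℝ, fix an index j with |μ_k − μ_j| ≤ 4 for all k, and suppose Σ_{k ≠ j} φ_k ≤ (1/2)·exp(−4t). Let X have law Σ_{k=1}^K φ_k·N(μ_k, σ²). Then E[exp(t·|X − μ_j|)] ≤ 3·exp(t²σ²/2). -/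
/-!
Since `exp (t |y|) ≤ exp (t y) + exp (-t y)`, the two-sided Gaussian MGF bounds each component:
`E_{N(m, σ²)} exp (t |X - c|) ≤ 2 exp (t |m - c|) exp (t² σ² / 2)`. The target component
contributes at most `2 exp (t² σ² / 2)`; every other one at most `2 exp (4t) exp (t² σ² / 2)`,
and the factor `exp (4t)` is cancelled by the bound `(1/2) exp (-4t)` on their total weight.
-/

open MeasureTheory ProbabilityTheory Real
open scoped ENNReal NNReal

lemma exp_mul_abs_le_exp_mul_add_exp_neg_mul (t x : ℝ) :
    exp (t * |x|) ≤ exp (t * x) + exp (-t * x) := by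
  rcases abs_cases x with ⟨h, -⟩ | ⟨h, -⟩ <;> rw [h]
  · exact le_add_of_nonneg_right (exp_nonneg _)
  · rw [mul_neg, ← neg_mul]
    exact le_add_of_nonneg_left (exp_nonneg _)

lemma integral_exp_mul_abs_le_mgf_add_mgf {Ω : Type*} [MeasurableSpace Ω] {μ : Measure Ω}
    {X : Ω → ℝ} {t : ℝ} (hpos : Integrable (fun ω ↦ exp (t * X ω)) μ)
    (hneg : Integrable (fun ω ↦ exp (-t * X ω)) μ) :
    ∫ ω, exp (t * |X ω|) ∂μ ≤ mgf X μ t + mgf X μ (-t) := by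
  simp only [mgf]
  rw [← integral_add hpos hneg]
  exact integral_mono (integrable_exp_mul_abs hpos hneg) (hpos.add hneg)
    fun ω ↦ exp_mul_abs_le_exp_mul_add_exp_neg_mul t (X ω)

section Gaussian

variable {m : ℝ} {v : ℝ≥0}

lemma integral_exp_mul_abs_sub_gaussianReal (t c : ℝ) :
    ∫ x, exp (t * |x - c|) ∂gaussianReal m v = ∫ y, exp (t * |y|) ∂gaussianReal (m - c) v := by
  rw [← gaussianReal_map_sub_const c, integral_map (by fun_prop) (by fun_prop)]

lemma integrable_exp_mul_abs_sub_gaussianReal (t c : ℝ) :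
    Integrable (fun x ↦ exp (t * |x - c|)) (gaussianReal m v) := by
  have h := integrable_exp_mul_abs (μ := gaussianReal (m - c) v) (X := fun y ↦ y)
    (integrable_exp_mul_gaussianReal t) (integrable_exp_mul_gaussianReal (-t))
  rw [← gaussianReal_map_sub_const c] at h
  exact h.comp_measurable (by fun_prop)

lemma integral_exp_mul_abs_sub_gaussianReal_le {t : ℝ} (ht : 0 ≤ t) (c : ℝ) :
    ∫ x, exp (t * |x - c|) ∂gaussianReal m v ≤ 2 * exp (t * |m - c|) * exp (t ^ 2 * v / 2) := by
  rw [integral_exp_mul_abs_sub_gaussianReal]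
  refine (integral_exp_mul_abs_le_mgf_add_mgf (integrable_exp_mul_gaussianReal t)
    (integrable_exp_mul_gaussianReal (-t))).trans ?_
  have hterm : ∀ s, (m - c) * s ≤ t * |m - c| → s ^ 2 = t ^ 2 →
      exp ((m - c) * s + v * s ^ 2 / 2) ≤ exp (t * |m - c|) * exp (t ^ 2 * v / 2) :=
    fun s hs hs2 ↦ by
      rw [← exp_add, hs2]
      exact exp_le_exp.mpr (by linarith [mul_comm (v : ℝ) (t ^ 2)])
  rw [mgf_fun_id_gaussianReal, two_mul, add_mul]
  gcongr
  · exact hterm t (by rw [mul_comm]; exact mul_le_mul_of_nonneg_left (le_abs_self _) ht) rfl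
  · exact hterm (-t) (by
      rw [mul_neg, ← neg_mul, mul_comm]
      exact mul_le_mul_of_nonneg_left (neg_le_abs _) ht) (neg_sq t)

end Gaussian

lemma integral_sum_ofReal_smul_measure {Ω ι E : Type*} [MeasurableSpace Ω]
    [NormedAddCommGroup E] [NormedSpace ℝ E] {ν : ι → Measure Ω} {f : Ω → E} {φ : ι → ℝ}
    (s : Finset ι) (hφ : ∀ k ∈ s, 0 ≤ φ k) (hf : ∀ k ∈ s, Integrable f (ν k)) :
    ∫ x, f x ∂(∑ k ∈ s, ENNReal.ofReal (φ k) • ν k) = ∑ k ∈ s, φ k • ∫ x, f x ∂ν k := by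
  rw [integral_finsetSum_measure fun k hk ↦ (hf k hk).smul_measure ENNReal.ofReal_ne_top]
  refine Finset.sum_congr rfl fun k hk ↦ ?_
  rw [integral_smul_measure, ENNReal.toReal_ofReal (hφ k hk)]

lemma sum_mul_le_add_of_sum_erase_le {ι : Type*} [Fintype ι] [DecidableEq ι]
    {φ I : ι → ℝ} {j : ι} {A B ε : ℝ} (hφ : ∀ k, 0 ≤ φ k) (hφj : φ j ≤ 1)
    (hA : 0 ≤ A) (hB : 0 ≤ B) (hIj : I j ≤ A) (hI : ∀ k ≠ j, I k ≤ B)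
    (hoff : ∑ k ∈ Finset.univ.erase j, φ k ≤ ε) :
    ∑ k, φ k * I k ≤ A + ε * B := by
  rw [← Finset.add_sum_erase _ _ (Finset.mem_univ j)]
  gcongr
  · calc φ j * I j ≤ φ j * A := mul_le_mul_of_nonneg_left hIj (hφ j)
      _ ≤ A := mul_le_of_le_one_left hA hφj
  · calc ∑ k ∈ Finset.univ.erase j, φ k * I k
        ≤ ∑ k ∈ Finset.univ.erase j, φ k * B := Finset.sum_le_sum fun k hk ↦
          mul_le_mul_of_nonneg_left (hI k (Finset.ne_of_mem_erase hk)) (hφ k)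
      _ = (∑ k ∈ Finset.univ.erase j, φ k) * B := (Finset.sum_mul ..).symm
      _ ≤ ε * B := mul_le_mul_of_nonneg_right hoff hB

theorem mixture_abs_mgf_bound_general (K : ℕ) (σ : ℝ)
    (t : ℝ) (ht : 0 < t) (φ : Fin K → ℝ) (hφ : ∀ k, 0 ≤ φ k) (hφsum : ∑ k, φ k = 1)
    (μ : Fin K → ℝ) (j : Fin K) (hclose : ∀ k, |μ k - μ j| ≤ 4)
    (hoff : ∑ k ∈ Finset.univ.erase j, φ k ≤ (1 / 2) * Real.exp (-4 * t)) :
    ∫ x, Real.exp (t * |x - μ j|)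
        ∂(∑ k, (ENNReal.ofReal (φ k)) • gaussianReal (μ k) ⟨σ ^ 2, sq_nonneg σ⟩) ≤
      3 * Real.exp (t ^ 2 * σ ^ 2 / 2) := by
  have hφj : φ j ≤ 1 := hφsum ▸ Finset.single_le_sum (fun k _ ↦ hφ k) (Finset.mem_univ j)
  have hcomponent (k : Fin K) :
      ∫ x, exp (t * |x - μ j|) ∂gaussianReal (μ k) ⟨σ ^ 2, sq_nonneg σ⟩
        ≤ 2 * exp (t * |μ k - μ j|) * exp (t ^ 2 * σ ^ 2 / 2) :=
    integral_exp_mul_abs_sub_gaussianReal_le ht.le (μ j)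
  have hfar (k : Fin K) : exp (t * |μ k - μ j|) ≤ exp (4 * t) :=
    exp_le_exp.mpr (by linarith [mul_le_mul_of_nonneg_left (hclose k) ht.le])
  have hcancel : exp (-4 * t) * exp (4 * t) = 1 := by rw [← exp_add]; simp
  calc _ = ∑ k, φ k • ∫ x, exp (t * |x - μ j|) ∂gaussianReal (μ k) ⟨σ ^ 2, sq_nonneg σ⟩ :=
        integral_sum_ofReal_smul_measure _ (fun k _ ↦ hφ k)
          fun k _ ↦ integrable_exp_mul_abs_sub_gaussianReal t (μ j)
    _ ≤ 2 * exp (t ^ 2 * σ ^ 2 / 2)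
          + (1 / 2) * exp (-4 * t) * (2 * exp (4 * t) * exp (t ^ 2 * σ ^ 2 / 2)) :=
        sum_mul_le_add_of_sum_erase_le hφ hφj (by positivity) (by positivity)
          ((hcomponent j).trans_eq (by simp)) (fun k _ ↦ (hcomponent k).trans
            (mul_le_mul_of_nonneg_right (mul_le_mul_of_nonneg_left (hfar k) two_pos.le)
              (exp_nonneg _))) hoff
    _ = 3 * exp (t ^ 2 * σ ^ 2 / 2) := by
      linear_combination exp (t ^ 2 * σ ^ 2 / 2) * hcancel

/-- MGF bound for the absolute deviation of a Gaussian mixture around a fixed component mean: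
if `|μ_k − μ_j| ≤ 4` for all `k` and the off-target weights satisfy
`Σ_{k ≠ j} φ_k ≤ (1/2)·exp(−4t)`, then for `X ~ Σ_k φ_k·N(μ_k, σ²)`,
`E[exp(t·|X − μ_j|)] ≤ 3·exp(t²σ²/2)`. -/
theorem mixture_abs_mgf_bound (K : ℕ) (hK : 1 ≤ K) (σ : ℝ) (hσ : 0 < σ)
    (t : ℝ) (ht : 0 < t) (φ : Fin K → ℝ) (hφ : ∀ k, 0 ≤ φ k) (hφsum : ∑ k, φ k = 1)
    (μ : Fin K → ℝ) (j : Fin K) (hclose : ∀ k, |μ k - μ j| ≤ 4)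
    (hoff : ∑ k ∈ Finset.univ.erase j, φ k ≤ (1 / 2) * Real.exp (-4 * t)) :
    ∫ x, Real.exp (t * |x - μ j|)
        ∂(∑ k, (ENNReal.ofReal (φ k)) • gaussianReal (μ k) ⟨σ ^ 2, sq_nonneg σ⟩) ≤
      3 * Real.exp (t ^ 2 * σ ^ 2 / 2) :=
  mixture_abs_mgf_bound_general K σ t ht φ hφ hφsum μ j hclose hoff
end

section
/- Let K ≥ 1, σ > 0, and let t satisfy 0 < t < 1/(2σ²). Let φ₁, …, φ_K ≥ 0 with Σ_{k=1}^K φ_k = 1, let μ₁, …, μ_K ∈ ℝ, fix an index j with |μ_k − μ_j| ≤ 4 for all k, and suppose Σ_{k ≠ j} φ_k ≤ exp(−16t/(1 − 2tσ²)). Let X have law Σ_{k=1}^K φ_k·N(μ_k, σ²). Then E[exp(t·(X − μ_j)²)] ≤ 2/√(1 − 2tσ²). -/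
open MeasureTheory ProbabilityTheory Real
open scoped ENNReal NNReal

lemma gauss_prod_eq (σ t m a : ℝ) (hσ : 0 < σ) (h1 : 0 < 1 - 2 * t * σ ^ 2) (x : ℝ) :
    Real.exp (t * (x - a) ^ 2) * gaussianPDFReal m ⟨σ ^ 2, sq_nonneg σ⟩ x =
      (Real.sqrt (2 * π * σ ^ 2))⁻¹ * Real.exp (t * (a - m) ^ 2 / (1 - 2 * t * σ ^ 2)) *
        Real.exp (-((1 - 2 * t * σ ^ 2) / (2 * σ ^ 2)) *
          (x - (m - 2 * t * σ ^ 2 * a) / (1 - 2 * t * σ ^ 2)) ^ 2) := by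
  have hs : (0:ℝ) < σ ^ 2 := by positivity
  simp only [gaussianPDFReal, NNReal.coe_mk]
  rw [mul_comm (Real.exp _)]
  simp only [mul_assoc, ← Real.exp_add]
  congr 1
  have hne : (1 - 2 * t * σ ^ 2) ≠ 0 := h1.ne'
  have hσne : σ ≠ 0 := hσ.ne'
  rw [Real.exp_eq_exp]
  have hne3 : (1 - 2 * (t * σ ^ 2)) ≠ 0 := by
    rw [show (1 - 2 * (t * σ ^ 2)) = 1 - 2 * t * σ ^ 2 by ring]; exact hne
  have hc : ((⟨σ ^ 2, sq_nonneg σ⟩ : ℝ≥0) : ℝ) = σ ^ 2 := rfl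
  change -(x - m) ^ 2 / (2 * σ ^ 2) + t * (x - a) ^ 2 = _
  generalize hu : 1 - 2 * (t * σ ^ 2) = u at hne3 ⊢
  have ht : t = (1 - u) / (2 * σ ^ 2) := by field_simp; linarith
  subst ht
  field_simp
  ring

lemma gauss_sq_mgf (σ t m a : ℝ) (hσ : 0 < σ) (h1 : 0 < 1 - 2 * t * σ ^ 2) :
    ∫ x, Real.exp (t * (x - a) ^ 2) ∂(gaussianReal m ⟨σ ^ 2, sq_nonneg σ⟩) =
      Real.exp (t * (a - m) ^ 2 / (1 - 2 * t * σ ^ 2)) / Real.sqrt (1 - 2 * t * σ ^ 2) := by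
  have hs : (0:ℝ) < σ ^ 2 := by positivity
  have hv : (⟨σ ^ 2, sq_nonneg σ⟩ : ℝ≥0) ≠ 0 := by
    simp [← NNReal.coe_ne_zero, hs.ne']
  set b : ℝ := (1 - 2 * t * σ ^ 2) / (2 * σ ^ 2) with hb
  have hbpos : 0 < b := by positivity
  set d : ℝ := (m - 2 * t * σ ^ 2 * a) / (1 - 2 * t * σ ^ 2) with hd
  rw [gaussianReal_of_var_ne_zero _ hv]
  have hpdf : (gaussianPDF m ⟨σ ^ 2, sq_nonneg σ⟩) =
      fun x => ((gaussianPDFReal m ⟨σ ^ 2, sq_nonneg σ⟩ x).toNNReal : ℝ≥0∞) := by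
    ext x; rfl
  rw [hpdf]
  erw [integral_withDensity_eq_integral_smul
    ((measurable_gaussianPDFReal _ _).real_toNNReal) _]
  have : ∀ x : ℝ, (gaussianPDFReal m ⟨σ ^ 2, sq_nonneg σ⟩ x).toNNReal •
      Real.exp (t * (x - a) ^ 2) =
      (Real.sqrt (2 * π * σ ^ 2))⁻¹ * Real.exp (t * (a - m) ^ 2 / (1 - 2 * t * σ ^ 2)) *
        Real.exp (-b * (x - d) ^ 2) := by
    intro x
    erw [NNReal.smul_def, smul_eq_mul, Real.coe_toNNReal _ (gaussianPDFReal_nonneg _ _ _),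
      mul_comm]
    exact gauss_prod_eq σ t m a hσ h1 x
  simp_rw [this]
  rw [integral_const_mul]
  have hshift : ∫ x : ℝ, Real.exp (-b * (x - d) ^ 2) =
      ∫ x : ℝ, Real.exp (-b * x ^ 2) :=
    integral_sub_right_eq_self (fun x => Real.exp (-b * x ^ 2)) d
  rw [hshift, integral_gaussian]
  have hkey : (Real.sqrt (2 * π * σ ^ 2))⁻¹ * Real.sqrt (π / b) =
      (Real.sqrt (1 - 2 * t * σ ^ 2))⁻¹ := by
    rw [← Real.sqrt_inv, ← Real.sqrt_mul (by positivity), ← Real.sqrt_inv]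
    congr 1
    rw [hb]
    field_simp
  rw [div_eq_mul_inv (Real.exp (t * (a - m) ^ 2 / (1 - 2 * t * σ ^ 2)))
    (Real.sqrt (1 - 2 * t * σ ^ 2)), ← hkey]
  ring

lemma gauss_sq_integrable (σ t m a : ℝ) (hσ : 0 < σ) (h1 : 0 < 1 - 2 * t * σ ^ 2) :
    Integrable (fun x => Real.exp (t * (x - a) ^ 2)) (gaussianReal m ⟨σ ^ 2, sq_nonneg σ⟩) := by
  have hs : (0:ℝ) < σ ^ 2 := by positivity
  have hv : (⟨σ ^ 2, sq_nonneg σ⟩ : ℝ≥0) ≠ 0 := by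
    simp [← NNReal.coe_ne_zero, hs.ne']
  set b : ℝ := (1 - 2 * t * σ ^ 2) / (2 * σ ^ 2) with hb
  have hbpos : 0 < b := by positivity
  set d : ℝ := (m - 2 * t * σ ^ 2 * a) / (1 - 2 * t * σ ^ 2) with hd
  rw [gaussianReal_of_var_ne_zero _ hv]
  have hpdf : (gaussianPDF m ⟨σ ^ 2, sq_nonneg σ⟩) =
      fun x => ((gaussianPDFReal m ⟨σ ^ 2, sq_nonneg σ⟩ x).toNNReal : ℝ≥0∞) := by
    ext x; rfl
  rw [hpdf]
  erw [integrable_withDensity_iff_integrable_smul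
    ((measurable_gaussianPDFReal _ _).real_toNNReal)]
  have heq : (fun x => (gaussianPDFReal m ⟨σ ^ 2, sq_nonneg σ⟩ x).toNNReal •
      Real.exp (t * (x - a) ^ 2)) =
      fun x => (Real.sqrt (2 * π * σ ^ 2))⁻¹ *
        Real.exp (t * (a - m) ^ 2 / (1 - 2 * t * σ ^ 2)) * Real.exp (-b * (x - d) ^ 2) := by
    ext x
    erw [NNReal.smul_def, smul_eq_mul, Real.coe_toNNReal _ (gaussianPDFReal_nonneg _ _ _),
      mul_comm]
    exact gauss_prod_eq σ t m a hσ h1 x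
  rw [heq]
  exact ((integrable_exp_neg_mul_sq hbpos).comp_sub_right d).const_mul _


open MeasureTheory ProbabilityTheory Real
open scoped ENNReal NNReal

/-- MGF bound for the squared deviation of a Gaussian mixture around a fixed component mean:
if `0 < t < 1/(2σ²)`, `|μ_k − μ_j| ≤ 4` for all `k`, and the off-target weights satisfy
`Σ_{k ≠ j} φ_k ≤ exp(−16t/(1 − 2tσ²))`, then for `X ~ Σ_k φ_k·N(μ_k, σ²)`,
`E[exp(t·(X − μ_j)²)] ≤ 2/√(1 − 2tσ²)`. -/
theorem mixture_sq_mgf_bound (K : ℕ) (hK : 1 ≤ K) (σ : ℝ) (hσ : 0 < σ)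
    (t : ℝ) (ht0 : 0 < t) (ht : t < 1 / (2 * σ ^ 2))
    (φ : Fin K → ℝ) (hφ : ∀ k, 0 ≤ φ k) (hφsum : ∑ k, φ k = 1)
    (μ : Fin K → ℝ) (j : Fin K) (hclose : ∀ k, |μ k - μ j| ≤ 4)
    (hoff : ∑ k ∈ Finset.univ.erase j, φ k ≤ Real.exp (-16 * t / (1 - 2 * t * σ ^ 2))) :
    ∫ x, Real.exp (t * (x - μ j) ^ 2)
        ∂(∑ k, (ENNReal.ofReal (φ k)) • gaussianReal (μ k) ⟨σ ^ 2, sq_nonneg σ⟩) ≤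
      2 / Real.sqrt (1 - 2 * t * σ ^ 2) := by
  have hs : (0:ℝ) < σ ^ 2 := by positivity
  have h1 : 0 < 1 - 2 * t * σ ^ 2 := by
    rw [lt_div_iff₀ (by positivity)] at ht
    nlinarith
  set u : ℝ := 1 - 2 * t * σ ^ 2 with hu
  have hsqrt : 0 < Real.sqrt u := Real.sqrt_pos.mpr h1
  rw [integral_finset_sum_measure (fun k _ =>
    (gauss_sq_integrable σ t (μ k) (μ j) hσ h1).smul_measure ENNReal.ofReal_ne_top)]
  simp_rw [integral_smul_measure, ENNReal.toReal_ofReal (hφ _), smul_eq_mul]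
  have hI : ∀ k, ∫ x, Real.exp (t * (x - μ j) ^ 2) ∂(gaussianReal (μ k) ⟨σ ^ 2, sq_nonneg σ⟩) =
      Real.exp (t * (μ j - μ k) ^ 2 / u) / Real.sqrt u :=
    fun k => gauss_sq_mgf σ t (μ k) (μ j) hσ h1
  simp_rw [hI]
  rw [← Finset.add_sum_erase _ _ (Finset.mem_univ j)]
  have hφj : φ j ≤ 1 := by
    have h := Finset.single_le_sum (f := φ) (fun i _ => hφ i) (Finset.mem_univ j)
    linarith [hφsum ▸ h]
  have hj : Real.exp (t * (μ j - μ j) ^ 2 / u) / Real.sqrt u = 1 / Real.sqrt u := by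
    simp
  have hrest : ∑ k ∈ Finset.univ.erase j, φ k * (Real.exp (t * (μ j - μ k) ^ 2 / u) / Real.sqrt u)
      ≤ 1 / Real.sqrt u := by
    have hbd : ∀ k ∈ Finset.univ.erase j,
        φ k * (Real.exp (t * (μ j - μ k) ^ 2 / u) / Real.sqrt u) ≤
          φ k * (Real.exp (16 * t / u) / Real.sqrt u) := by
      intro k _
      refine mul_le_mul_of_nonneg_left ?_ (hφ k)
      refine div_le_div_of_nonneg_right (Real.exp_le_exp.mpr ?_) hsqrt.le
      refine div_le_div_of_nonneg_right ?_ h1.le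
      have habs : |μ j - μ k| ≤ 4 := by rw [abs_sub_comm]; exact hclose k
      have hsq : (μ j - μ k) ^ 2 ≤ 16 := by nlinarith [abs_nonneg (μ j - μ k), sq_abs (μ j - μ k)]
      nlinarith
    calc ∑ k ∈ Finset.univ.erase j, φ k * (Real.exp (t * (μ j - μ k) ^ 2 / u) / Real.sqrt u)
        ≤ ∑ k ∈ Finset.univ.erase j, φ k * (Real.exp (16 * t / u) / Real.sqrt u) :=
          Finset.sum_le_sum hbd
      _ = (∑ k ∈ Finset.univ.erase j, φ k) * (Real.exp (16 * t / u) / Real.sqrt u) := by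
          rw [Finset.sum_mul]
      _ ≤ Real.exp (-16 * t / u) * (Real.exp (16 * t / u) / Real.sqrt u) := by
          refine mul_le_mul_of_nonneg_right hoff (by positivity)
      _ = 1 / Real.sqrt u := by
          have hee : Real.exp (-16 * t / u) * Real.exp (16 * t / u) = 1 := by
            rw [← Real.exp_add, show -16 * t / u + 16 * t / u = 0 by ring, Real.exp_zero]
          rw [← mul_div_assoc, hee]
    
  rw [hj]
  have hjterm : φ j * (1 / Real.sqrt u) ≤ 1 / Real.sqrt u := by
    nlinarith [hφj, hsqrt, one_div_pos.mpr hsqrt]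
  have : (2:ℝ) / Real.sqrt u = 1 / Real.sqrt u + 1 / Real.sqrt u := by ring
  rw [this]
  exact add_le_add hjterm hrest
end
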